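/- Let a = (a₁,a₂), b = (b₁,b₂) ∈ B_PD \ {(1,2.5),(2.5,1)} and ε₁, ε₂ > 0. If a₁ ≤ 2 ≤ b₁, then every trajectory (x̄_t)_{t≥1} of the dynamical system induced by the profile (s₁^{a,ε₁}, s₂^{b,ε₂}), from any initial point in 𝔖, converges to (2,2) as t → ∞. -/

import Mathlib

/- Semi-cooperative strategies in the repeated Prisoner's Dilemma (Section 4 of the
   paper). Actions: `true` = C (cooperate), `false` = D (defect). The payoff plane
   is the Euclidean plane ℝ². -/

/-- The Euclidean plane. -/
abbrev E2 := EuclideanSpace ℝ (Fin 2)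

/-- The point (a, b) of the Euclidean plane. -/
noncomputable def pt (a b : ℝ) : E2 := (WithLp.equiv 2 (Fin 2 → ℝ)).symm ![a, b]

/-- The vector payoff function of the Prisoner's Dilemma:
    u(C,C)=(2,2), u(C,D)=(0,3), u(D,C)=(3,0), u(D,D)=(1,1). -/
noncomputable def payoffPD : Bool → Bool → E2
  | true,  true  => pt 2 2
  | true,  false => pt 0 3
  | false, true  => pt 3 0
  | false, false => pt 1 1

/-- 𝔖 = conv{(2,2),(0,3),(3,0),(1,1)}. -/
def SPD : Set E2 := convexHull ℝ {pt 2 2, pt 0 3, pt 3 0, pt 1 1}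

/-- The set of β-core payoffs of the Prisoner's Dilemma:
    {(x, 3−x/2) : 1 ≤ x ≤ 2} ∪ {(3−y/2, y) : 1 ≤ y ≤ 2}. -/
def BPD : Set E2 :=
  {p | ∃ x : ℝ, 1 ≤ x ∧ x ≤ 2 ∧ p = pt x (3 - x / 2)} ∪
  {p | ∃ y : ℝ, 1 ≤ y ∧ y ≤ 2 ∧ p = pt (3 - y / 2) y}

/-- T₁(v) = {x ∈ 𝔖 : x₂ ≤ ((v₂−1)/(v₁−1))·x₁ + (v₁−v₂)/(v₁−1)}. -/
def T1 (v : E2) : Set E2 :=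
  {x ∈ SPD | x 1 ≤ (v 1 - 1) / (v 0 - 1) * x 0 + (v 0 - v 1) / (v 0 - 1)}

/-- T₂(v) = {x ∈ 𝔖 : x₂ ≥ ((v₂−1)/(v₁−1))·x₁ + (v₁−v₂)/(v₁−1)}. -/
def T2 (v : E2) : Set E2 :=
  {x ∈ SPD | (v 1 - 1) / (v 0 - 1) * x 0 + (v 0 - v 1) / (v 0 - 1) ≤ x 1}

/-- K₁(v,ε) = T₁(v)^ε ∩ {x ∈ 𝔖 : x₁ ≥ 1 and x₂ ≤ v₂}, where `·^ε` is the closed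
ε-neighbourhood. -/
def K1 (v : E2) (ε : ℝ) : Set E2 :=
  Metric.cthickening ε (T1 v) ∩ {x ∈ SPD | 1 ≤ x 0 ∧ x 1 ≤ v 1}

/-- K₂(v,ε) = T₂(v)^ε ∩ {x ∈ 𝔖 : x₁ ≤ v₁ and x₂ ≥ 1}. -/
def K2 (v : E2) (ε : ℝ) : Set E2 :=
  Metric.cthickening ε (T2 v) ∩ {x ∈ SPD | x 0 ≤ v 0 ∧ 1 ≤ x 1}

open Classical in
/-- The semi-cooperative strategy of player 1 determined by `v` and `ε`:
play C iff the current average payoff lies in K₁(v,ε). -/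
noncomputable def semi1 (v : E2) (ε : ℝ) (x : E2) : Bool :=
  if x ∈ K1 v ε then true else false

open Classical in
/-- The semi-cooperative strategy of player 2 determined by `v` and `ε`:
play C iff the current average payoff lies in K₂(v,ε). -/
noncomputable def semi2 (v : E2) (ε : ℝ) (x : E2) : Bool :=
  if x ∈ K2 v ε then true else false

/-- `x` is the trajectory (sequence of average payoffs), indexed from stage 1, of the
dynamical system induced by `f = u ∘ s`, starting at `x 1 ∈ 𝔖`:
x̄_{t+1} = (t·x̄_t + f(x̄_t))/(t+1). -/
def IsTrajPD (f : E2 → E2) (x : ℕ → E2) : Prop :=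
  x 1 ∈ SPD ∧ ∀ t : ℕ, 1 ≤ t →
    x (t + 1) = ((t : ℝ) + 1)⁻¹ • ((t : ℝ) • x t + f (x t))

open Filter

/-!
Both K₁(a,ε₁) and K₂(b,ε₂) are convex and contain (2,2), so once the trajectory enters their
intersection both players cooperate forever and x̄_t = (2,2) + (T/t)(x̄_T − (2,2)) → (2,2).

Suppose it never does. Then every stage pays (0,3) or (3,0), so the coordinate sum of x̄_t stays
within 1/t of 3. Near the antidiagonal, a point outside K₁ has first coordinate at most
3/2 − ε/2 and a point outside K₂ has second coordinate at most 3/2 − ε/2, with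
ε = min(ε₁, ε₂, 1), because the boundary lines of T₁(a) and T₂(b) cross the antidiagonal on
either side of (3/2, 3/2). As x̄ moves by O(1/t) per stage, from some stage on the trajectory
never enters or leaves K₁. But then the action profile is constant and x̄_t tends to (0,3) or
to (3,0); near (0,3) it would lie in K₂ as well as in K₁, near (3,0) it would lie in K₁.

Player 2's regions are the mirror images of player 1's under (x₁, x₂) ↦ (x₂, x₁).
-/

open Topology

@[simp] lemma pt_apply_zero (u v : ℝ) : pt u v 0 = u := rfl

@[simp] lemma pt_apply_one (u v : ℝ) : pt u v 1 = v := rfl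

section PayoffSet

lemma convex_SPD : Convex ℝ SPD := convex_convexHull ℝ _

lemma convex_setOf_le_coords (α β r : ℝ) : Convex ℝ {y : E2 | α * y 0 + β * y 1 ≤ r} :=
  convex_halfSpace_le ⟨fun _ _ => by simp; ring, fun _ _ => by simp; ring⟩ r

lemma bounds_of_mem_SPD {x : E2} (hx : x ∈ SPD) :
    3 ≤ 2 * x 0 + x 1 ∧ 2 * x 0 + x 1 ≤ 6 ∧ 3 ≤ x 0 + 2 * x 1 ∧ x 0 + 2 * x 1 ≤ 6 := by
  have hconv := (((convex_setOf_le_coords (-2) (-1) (-3)).inter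
    (convex_setOf_le_coords 2 1 6)).inter (convex_setOf_le_coords (-1) (-2) (-3))).inter
    (convex_setOf_le_coords 1 2 6)
  obtain ⟨⟨⟨h1, h2⟩, h3⟩, h4⟩ :=
    convexHull_min (by simp [Set.insert_subset_iff]; norm_num) hconv hx
  simp only [Set.mem_ofPred_eq] at h1 h2 h3 h4
  refine ⟨?_, ?_, ?_, ?_⟩ <;> linarith

lemma apply_mem_Icc_of_mem_SPD {y : E2} (hy : y ∈ SPD) (i : Fin 2) : y i ∈ Set.Icc 0 3 := by
  obtain ⟨h1, h2, h3, h4⟩ := bounds_of_mem_SPD hy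
  fin_cases i <;> constructor <;> dsimp <;> linarith

lemma pt_mem_SPD_of_add_eq_three {p : ℝ} (h0 : 0 ≤ p) (h3 : p ≤ 3) : pt p (3 - p) ∈ SPD := by
  have h : pt p (3 - p) = (1 - p / 3) • pt 0 3 + (p / 3) • pt 3 0 := by
    ext i
    fin_cases i <;> simp
    ring
  rw [h]
  exact convex_SPD (subset_convexHull ℝ _ (by simp)) (subset_convexHull ℝ _ (by simp))
    (by linarith) (by linarith) (by ring)

lemma payoffPD_mem_SPD (p q : Bool) : payoffPD p q ∈ SPD := by
  cases p <;> cases q <;> exact subset_convexHull ℝ _ (by simp [payoffPD])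

end PayoffSet

lemma dist_le_of_sq_add_sq_le {x y : E2} {r : ℝ} (hr : 0 ≤ r)
    (h : (x 0 - y 0) ^ 2 + (x 1 - y 1) ^ 2 ≤ r ^ 2) : dist x y ≤ r := by
  rw [EuclideanSpace.dist_eq, Fin.sum_univ_two, Real.dist_eq, Real.dist_eq, sq_abs, sq_abs]
  exact (Real.sqrt_le_left hr).2 h

section Swap

noncomputable def swapE2 : E2 ≃ₗᵢ[ℝ] E2 :=
  LinearIsometryEquiv.piLpCongrLeft 2 ℝ ℝ (Equiv.swap 0 1)

@[simp] lemma swapE2_apply_zero (x : E2) : swapE2 x 0 = x 1 := rfl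

@[simp] lemma swapE2_apply_one (x : E2) : swapE2 x 1 = x 0 := rfl

@[simp] lemma swapE2_swapE2 (x : E2) : swapE2 (swapE2 x) = x := by
  ext i
  fin_cases i <;> rfl

lemma swapE2_pt (u v : ℝ) : swapE2 (pt u v) = pt v u := by
  ext i
  fin_cases i <;> rfl

lemma swapE2_mem_SPD {x : E2} (hx : x ∈ SPD) : swapE2 x ∈ SPD := by
  have hV : ({pt 2 2, pt 0 3, pt 3 0, pt 1 1} : Set E2) =
      swapE2.toLinearEquiv.toLinearMap '' {pt 2 2, pt 0 3, pt 3 0, pt 1 1} := by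
    simp [swapE2_pt, Set.image_insert_eq, Set.insert_comm]
  rw [SPD, hV, ← LinearMap.image_convexHull]
  exact ⟨x, hx, rfl⟩

lemma swapE2_mem_SPD_iff {x : E2} : swapE2 x ∈ SPD ↔ x ∈ SPD :=
  ⟨fun h => by simpa using swapE2_mem_SPD h, swapE2_mem_SPD⟩

end Swap

namespace IsTrajPD

variable {f : E2 → E2} {x : ℕ → E2}

lemma succ_smul (hx : IsTrajPD f x) {t : ℕ} (ht : 1 ≤ t) :
    ((t : ℝ) + 1) • x (t + 1) = (t : ℝ) • x t + f (x t) := by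
  rw [hx.2 t ht, smul_inv_smul₀ (by positivity)]

lemma succ_mem {C : Set E2} (hx : IsTrajPD f x) (hC : Convex ℝ C) {t : ℕ} (ht : 1 ≤ t)
    (hxt : x t ∈ C) (hft : f (x t) ∈ C) : x (t + 1) ∈ C := by
  convert hC hxt hft (a := t / (t + 1)) (b := 1 / (t + 1)) (by positivity) (by positivity)
    (by field_simp) using 1
  rw [hx.2 t ht]
  module

lemma mem_SPD (hx : IsTrajPD f x) (hf : ∀ y, f y ∈ SPD) {t : ℕ} (ht : 1 ≤ t) : x t ∈ SPD := by
  induction t, ht using Nat.le_induction with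
  | base => exact hx.1
  | succ t ht ih => exact hx.succ_mem convex_SPD ht ih (hf _)

lemma smul_map_sub_eq {F : Type*} [AddCommGroup F] [Module ℝ F] (hx : IsTrajPD f x)
    (φ : E2 →ₗ[ℝ] F) (c : F) {T n : ℕ} (hT : 1 ≤ T) (hTn : T ≤ n)
    (hc : ∀ t, T ≤ t → t < n → φ (f (x t)) = c) :
    (n : ℝ) • (φ (x n) - c) = (T : ℝ) • (φ (x T) - c) := by
  induction n, hTn using Nat.le_induction with
  | base => rfl
  | succ n hn ih =>
    have h := congrArg φ (hx.succ_smul (hT.trans hn))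
    rw [map_smul, map_add, map_smul, hc n hn (by omega)] at h
    rw [← ih fun t h1 h2 => hc t h1 (by omega)]
    push_cast
    linear_combination (norm := module) h

lemma tendsto_of_forall_ge (hx : IsTrajPD f x) {T : ℕ} (hT : 1 ≤ T) {p : E2}
    (h : ∀ t, T ≤ t → f (x t) = p) : Tendsto x atTop (𝓝 p) := by
  have hlim : Tendsto (fun n : ℕ => p + ((T : ℝ) / n) • (x T - p)) atTop
      (𝓝 (p + (0 : ℝ) • (x T - p))) :=
    tendsto_const_nhds.add ((tendsto_const_div_atTop_nhds_zero_nat _).smul_const _)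
  rw [zero_smul, add_zero] at hlim
  refine hlim.congr' ?_
  filter_upwards [eventually_ge_atTop T] with n hn
  have hn0 : (n : ℝ) ≠ 0 := Nat.cast_ne_zero.2 (by omega)
  have h := hx.smul_map_sub_eq LinearMap.id p hT hn fun t ht _ => h t ht
  simp only [LinearMap.id_apply] at h
  rw [div_eq_inv_mul, mul_smul, ← h, inv_smul_smul₀ hn0, add_sub_cancel]

lemma abs_fst_add_snd_sub_three_le (hx : IsTrajPD f x)
    (hf : ∀ t, 1 ≤ t → f (x t) 0 + f (x t) 1 = 3) {t : ℕ} (ht : 1 ≤ t) :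
    |x t 0 + x t 1 - 3| ≤ 1 / t := by
  have h := hx.smul_map_sub_eq
    (PiLp.projₗ (𝕜 := ℝ) 2 (fun _ : Fin 2 => ℝ) 0 + PiLp.projₗ 2 _ 1) (3 : ℝ) le_rfl ht
    fun s hs _ => by simpa using hf s hs
  simp only [LinearMap.add_apply, PiLp.projₗ_apply, smul_eq_mul, Nat.cast_one, one_mul] at h
  obtain ⟨h1, h2, h3, h4⟩ := bounds_of_mem_SPD hx.1
  have htpos : (0 : ℝ) < t := by exact_mod_cast ht
  rw [le_div_iff₀ htpos, ← abs_of_pos htpos, ← abs_mul, mul_comm, h, abs_le]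
  constructor <;> linarith

lemma apply_succ_le (hx : IsTrajPD f x) (hf : ∀ y, f y ∈ SPD) {t : ℕ} (ht : 1 ≤ t)
    (i : Fin 2) : x (t + 1) i ≤ x t i + 3 / (t + 1) := by
  have h := congrArg (· i) (hx.succ_smul ht)
  simp only [PiLp.smul_apply, PiLp.add_apply, smul_eq_mul] at h
  have hxt := apply_mem_Icc_of_mem_SPD (hx.mem_SPD hf ht) i
  have hft := apply_mem_Icc_of_mem_SPD (hf (x t)) i
  rw [← sub_le_iff_le_add', le_div_iff₀ (by positivity)]
  nlinarith [hxt.1, hft.2]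

end IsTrajPD

/-- What the argument uses of a point of the branch {(x, 3 − x/2) : 1 < x ≤ 2} of B_PD. -/
structure UpperBranch (v : E2) : Prop where
  one_lt_fst : 1 < v 0
  fst_le_snd : v 0 ≤ v 1
  two_le_snd : 2 ≤ v 1

lemma upperBranch_of_mem_BPD {a : E2} (ha : a ∈ BPD) (ha1 : a ≠ pt 1 (5 / 2)) (h : a 0 ≤ 2) :
    UpperBranch a := by
  rcases ha with ⟨s, hs1, hs2, rfl⟩ | ⟨s, hs1, hs2, rfl⟩
  · have hs : 1 < s := hs1.lt_of_ne fun hs => ha1 (by rw [← hs]; norm_num)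
    exact ⟨hs, by simp; linarith, by simp; linarith⟩
  · simp only [pt_apply_zero] at h
    obtain rfl : s = 2 := by linarith
    exact ⟨by norm_num, by norm_num, by norm_num⟩

lemma upperBranch_swapE2_of_mem_BPD {b : E2} (hb : b ∈ BPD) (hb2 : b ≠ pt (5 / 2) 1)
    (h : 2 ≤ b 0) : UpperBranch (swapE2 b) := by
  rcases hb with ⟨s, hs1, hs2, rfl⟩ | ⟨s, hs1, hs2, rfl⟩
  · simp only [pt_apply_zero] at h
    obtain rfl : s = 2 := by linarith
    exact ⟨by norm_num, by norm_num, by norm_num⟩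
  · have hs : 1 < s := hs1.lt_of_ne fun hs => hb2 (by rw [← hs]; norm_num)
    exact ⟨hs, by simp; linarith, by simp; linarith⟩

section PlayerOne

variable {v x : E2} {ε δ : ℝ}

lemma mem_T1_iff (hv : 1 < v 0) :
    x ∈ T1 v ↔ x ∈ SPD ∧ (x 1 - 1) * (v 0 - 1) ≤ (v 1 - 1) * (x 0 - 1) := by
  have h : (v 1 - 1) / (v 0 - 1) * x 0 + (v 0 - v 1) / (v 0 - 1) =
      (v 1 - 1) * (x 0 - 1) / (v 0 - 1) + 1 := by
    field_simp [(sub_pos.2 hv).ne']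
    ring
  rw [T1, Set.mem_sep_iff, h, ← sub_le_iff_le_add, le_div_iff₀ (by linarith)]

lemma convex_T1 (v : E2) : Convex ℝ (T1 v) := by
  have h : Convex ℝ {x : E2 | x 1 ≤ (v 1 - 1) / (v 0 - 1) * x 0 + (v 0 - v 1) / (v 0 - 1)} := by
    intro p hp q hq s t hs ht hst
    obtain rfl : t = 1 - s := by linarith
    simp only [Set.mem_ofPred_eq, PiLp.add_apply, PiLp.smul_apply, smul_eq_mul] at *
    nlinarith [mul_le_mul_of_nonneg_left hp hs, mul_le_mul_of_nonneg_left hq ht]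
  exact convex_SPD.inter h

lemma convex_K1 (v : E2) (ε : ℝ) : Convex ℝ (K1 v ε) := by
  have h : Convex ℝ {x : E2 | 1 ≤ x 0 ∧ x 1 ≤ v 1} := by
    intro p hp q hq s t hs ht hst
    obtain rfl : t = 1 - s := by linarith
    simp only [Set.mem_ofPred_eq, PiLp.add_apply, PiLp.smul_apply, smul_eq_mul] at *
    constructor <;> nlinarith [mul_le_mul_of_nonneg_left hp.1 hs, mul_le_mul_of_nonneg_left hq.1 ht,
      mul_le_mul_of_nonneg_left hp.2 hs, mul_le_mul_of_nonneg_left hq.2 ht]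
  exact ((convex_T1 v).cthickening ε).inter (convex_SPD.inter h)

lemma K1_mono {ε ε' : ℝ} (h : ε ≤ ε') : K1 v ε ⊆ K1 v ε' :=
  Set.inter_subset_inter_left _ (Metric.cthickening_mono h _)

lemma mem_K1_of_mem_T1 (hx : x ∈ T1 v) (h0 : 1 ≤ x 0) (h1 : x 1 ≤ v 1) : x ∈ K1 v ε :=
  ⟨Metric.self_subset_cthickening _ hx, hx.1, h0, h1⟩

lemma mem_K1_of_snd_le_fst (hv : UpperBranch v) (hx : x ∈ SPD) (h : x 1 ≤ x 0) :
    x ∈ K1 v ε := by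
  obtain ⟨h1, -, -, h4⟩ := bounds_of_mem_SPD hx
  have hx0 : 1 ≤ x 0 := by linarith
  refine mem_K1_of_mem_T1 ((mem_T1_iff hv.one_lt_fst).2 ⟨hx, ?_⟩) hx0
    (by linarith [hv.two_le_snd])
  nlinarith [mul_le_mul_of_nonneg_left h (sub_nonneg.2 hv.one_lt_fst.le),
    mul_le_mul_of_nonneg_left hv.fst_le_snd (sub_nonneg.2 hx0)]

lemma mem_cthickening_T1_of_le_fst (hv : UpperBranch v) (hδ : δ ≤ ε / 4) (hx : x ∈ SPD)
    (hsum : |x 0 + x 1 - 3| ≤ δ) (h : 3 / 2 - ε / 2 + δ ≤ x 0) :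
    x ∈ Metric.cthickening ε (T1 v) := by
  by_cases hT : x ∈ T1 v
  · exact Metric.self_subset_cthickening _ hT
  obtain ⟨hv0, hv01, hv1⟩ := hv
  rw [mem_T1_iff hv0, not_and, not_le] at hT
  have habove := hT hx
  obtain ⟨he1, he2⟩ := abs_le.1 hsum
  -- the boundary line of `T1 v` crosses the antidiagonal `x 0 + x 1 = 3` at `(p, 3 - p)`
  set d := v 0 + v 1 - 2
  have hd : 0 < d := by linarith
  set p := 1 + (v 0 - 1) / d
  have hpd : (p - 1) * d = v 0 - 1 := by simp only [p]; field_simp; ring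
  have hp1 : 1 ≤ p := by nlinarith
  have hp2 : p ≤ 3 / 2 := by nlinarith
  have hq : pt p (3 - p) ∈ T1 v :=
    (mem_T1_iff hv0).2 ⟨pt_mem_SPD_of_add_eq_three (by linarith) (by linarith), by
      simp only [pt_apply_zero, pt_apply_one]; nlinarith⟩
  have hlow : x 0 - p < δ := by nlinarith
  refine Metric.mem_cthickening_of_dist_le _ _ _ _ hq (dist_le_of_sq_add_sq_le (by linarith) ?_)
  simp only [pt_apply_zero, pt_apply_one]
  have h0 : (x 0 - p) ^ 2 ≤ (ε / 2) ^ 2 := sq_le_sq' (by linarith) (by linarith)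
  have h1 : (x 1 - (3 - p)) ^ 2 ≤ (ε / 2) ^ 2 := sq_le_sq' (by linarith) (by linarith)
  nlinarith

lemma fst_le_of_notMem_K1 (hv : UpperBranch v) (hε1 : ε ≤ 1) (hδ : δ ≤ ε / 4) (hx : x ∈ SPD)
    (hsum : |x 0 + x 1 - 3| ≤ δ) (hK : x ∉ K1 v ε) : x 0 ≤ 3 / 2 - ε / 2 + δ := by
  by_contra! h
  obtain ⟨he1, he2⟩ := abs_le.1 hsum
  exact hK ⟨mem_cthickening_T1_of_le_fst hv hδ hx hsum h.le, hx, by linarith,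
    by linarith [hv.two_le_snd]⟩

end PlayerOne

section PlayerTwo

variable {b x : E2} {ε δ : ℝ}

lemma mem_T2_iff (hb : 1 < b 0) :
    x ∈ T2 b ↔ x ∈ SPD ∧ (b 1 - 1) * (x 0 - 1) ≤ (x 1 - 1) * (b 0 - 1) := by
  have h : (b 1 - 1) / (b 0 - 1) * x 0 + (b 0 - b 1) / (b 0 - 1) =
      (b 1 - 1) * (x 0 - 1) / (b 0 - 1) + 1 := by
    field_simp [(sub_pos.2 hb).ne']
    ring
  rw [T2, Set.mem_sep_iff, h, ← le_sub_iff_add_le, div_le_iff₀ (by linarith)]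

lemma swapE2_mem_T1_iff (hb0 : 1 < b 0) (hb1 : 1 < b 1) :
    swapE2 x ∈ T1 (swapE2 b) ↔ x ∈ T2 b := by
  rw [mem_T1_iff (by simpa using hb1), mem_T2_iff hb0, swapE2_mem_SPD_iff]
  simp only [swapE2_apply_zero, swapE2_apply_one, mul_comm]

lemma mem_K2_iff_swapE2_mem_K1 (hb0 : 1 < b 0) (hb1 : 1 < b 1) :
    x ∈ K2 b ε ↔ swapE2 x ∈ K1 (swapE2 b) ε := by
  have hT : T1 (swapE2 b) = swapE2 '' T2 b := by
    ext y
    refine ⟨fun h => ⟨swapE2 y, (swapE2_mem_T1_iff hb0 hb1).1 (by simpa using h), by simp⟩, ?_⟩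
    rintro ⟨z, hz, rfl⟩
    exact (swapE2_mem_T1_iff hb0 hb1).2 hz
  rw [K1, K2, hT, Set.mem_inter_iff, Set.mem_inter_iff, Metric.mem_cthickening_iff,
    Metric.mem_cthickening_iff, Metric.infEDist_image swapE2.isometry]
  simp only [Set.mem_sep_iff, swapE2_mem_SPD_iff, swapE2_apply_zero, swapE2_apply_one]
  tauto

lemma UpperBranch.mem_K2_iff (hb : UpperBranch (swapE2 b)) :
    x ∈ K2 b ε ↔ swapE2 x ∈ K1 (swapE2 b) ε :=
  mem_K2_iff_swapE2_mem_K1 (by linarith [hb.two_le_snd, swapE2_apply_one b]) hb.one_lt_fst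

lemma K2_mono {ε ε' : ℝ} (h : ε ≤ ε') : K2 b ε ⊆ K2 b ε' :=
  Set.inter_subset_inter_left _ (Metric.cthickening_mono h _)

lemma convex_K2 (hb : UpperBranch (swapE2 b)) : Convex ℝ (K2 b ε) := by
  have h : K2 b ε = swapE2 ⁻¹' K1 (swapE2 b) ε := Set.ext fun _ => hb.mem_K2_iff
  rw [h]
  exact (convex_K1 _ ε).linear_preimage swapE2.toLinearEquiv.toLinearMap

lemma mem_K2_of_fst_le_snd (hb : UpperBranch (swapE2 b)) (hx : x ∈ SPD) (h : x 0 ≤ x 1) :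
    x ∈ K2 b ε :=
  hb.mem_K2_iff.2 (mem_K1_of_snd_le_fst hb (swapE2_mem_SPD hx) h)

lemma snd_le_of_notMem_K2 (hb : UpperBranch (swapE2 b)) (hε1 : ε ≤ 1) (hδ : δ ≤ ε / 4)
    (hx : x ∈ SPD) (hsum : |x 0 + x 1 - 3| ≤ δ) (hK : x ∉ K2 b ε) : x 1 ≤ 3 / 2 - ε / 2 + δ :=
  fst_le_of_notMem_K1 hb hε1 hδ (swapE2_mem_SPD hx) (by simpa [add_comm] using hsum)
    (by rwa [← hb.mem_K2_iff])

end PlayerTwo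

/-- The map `f^s = u ∘ s` of the profile `(s₁^{a,ε₁}, s₂^{b,ε₂})`. -/
noncomputable def semiProfile (a b : E2) (ε₁ ε₂ : ℝ) (p : E2) : E2 :=
  payoffPD (semi1 a ε₁ p) (semi2 b ε₂ p)

section Profile

variable {a b y : E2} {ε₁ ε₂ : ℝ}

lemma mem_K1_or_mem_K2 (ha : UpperBranch a) (hb : UpperBranch (swapE2 b)) (hy : y ∈ SPD) :
    y ∈ K1 a ε₁ ∨ y ∈ K2 b ε₂ :=
  (le_total (y 1) (y 0)).imp (mem_K1_of_snd_le_fst ha hy) (mem_K2_of_fst_le_snd hb hy)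

lemma semiProfile_of_mem_inter (h : y ∈ K1 a ε₁ ∩ K2 b ε₂) :
    semiProfile a b ε₁ ε₂ y = pt 2 2 := by
  simp [semiProfile, semi1, semi2, h.1, h.2, payoffPD]

lemma semiProfile_of_mem_K1 (h1 : y ∈ K1 a ε₁) (h2 : y ∉ K2 b ε₂) :
    semiProfile a b ε₁ ε₂ y = pt 0 3 := by
  simp [semiProfile, semi1, semi2, h1, h2, payoffPD]

lemma semiProfile_of_notMem_K1 (ha : UpperBranch a) (hb : UpperBranch (swapE2 b))
    (hy : y ∈ SPD) (h1 : y ∉ K1 a ε₁) : semiProfile a b ε₁ ε₂ y = pt 3 0 := by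
  have h2 : y ∈ K2 b ε₂ := (mem_K1_or_mem_K2 ha hb hy).resolve_left h1
  simp [semiProfile, semi1, semi2, h1, h2, payoffPD]

lemma semiProfile_apply_zero_add_apply_one (ha : UpperBranch a) (hb : UpperBranch (swapE2 b))
    (hy : y ∈ SPD) (h : y ∉ K1 a ε₁ ∩ K2 b ε₂) :
    semiProfile a b ε₁ ε₂ y 0 + semiProfile a b ε₁ ε₂ y 1 = 3 := by
  by_cases h1 : y ∈ K1 a ε₁
  · rw [semiProfile_of_mem_K1 h1 fun h2 => h ⟨h1, h2⟩]
    norm_num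
  · rw [semiProfile_of_notMem_K1 ha hb hy h1]
    norm_num

lemma apply_le_of_notMem_K1_inter_K2 {ε δ : ℝ} (ha : UpperBranch a) (hb : UpperBranch (swapE2 b))
    (hε₁ : ε ≤ ε₁) (hε₂ : ε ≤ ε₂) (hε1 : ε ≤ 1) (hδ : δ ≤ ε / 4) (hy : y ∈ SPD)
    (hsum : |y 0 + y 1 - 3| ≤ δ) (h : y ∉ K1 a ε₁ ∩ K2 b ε₂) :
    (y ∈ K1 a ε₁ → y 1 ≤ 3 / 2 - ε / 2 + δ) ∧ (y ∉ K1 a ε₁ → y 0 ≤ 3 / 2 - ε / 2 + δ) :=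
  ⟨fun h1 => snd_le_of_notMem_K2 hb hε1 hδ hy hsum fun h2 => h ⟨h1, K2_mono hε₂ h2⟩,
    fun h1 => fst_le_of_notMem_K1 ha hε1 hδ hy hsum fun h1' => h1 (K1_mono hε₁ h1')⟩

end Profile

section Dynamics

variable {a b : E2} {ε₁ ε₂ : ℝ} {x : ℕ → E2}

lemma tendsto_of_mem_K1_inter_K2 (ha : UpperBranch a) (hb : UpperBranch (swapE2 b))
    (hx : IsTrajPD (semiProfile a b ε₁ ε₂) x) {T : ℕ} (hT : 1 ≤ T)
    (hxT : x T ∈ K1 a ε₁ ∩ K2 b ε₂) : Tendsto x atTop (𝓝 (pt 2 2)) := by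
  have hC : Convex ℝ (K1 a ε₁ ∩ K2 b ε₂) := (convex_K1 a ε₁).inter (convex_K2 hb)
  have h22 : pt 2 2 ∈ K1 a ε₁ ∩ K2 b ε₂ := by
    have hS : pt 2 2 ∈ SPD := subset_convexHull ℝ _ (by simp)
    exact ⟨mem_K1_of_snd_le_fst ha hS le_rfl, mem_K2_of_fst_le_snd hb hS le_rfl⟩
  have hstay : ∀ t, T ≤ t → x t ∈ K1 a ε₁ ∩ K2 b ε₂ := by
    intro t ht
    induction t, ht using Nat.le_induction with
    | base => exact hxT
    | succ t ht ih =>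
      exact hx.succ_mem hC (hT.trans ht) ih (by rwa [semiProfile_of_mem_inter ih])
  exact hx.tendsto_of_forall_ge hT fun t ht => semiProfile_of_mem_inter (hstay t ht)

lemma exists_forall_ge_mem_K1_succ_iff (ha : UpperBranch a) (hb : UpperBranch (swapE2 b))
    (hε₁ : 0 < ε₁) (hε₂ : 0 < ε₂) (hx : IsTrajPD (semiProfile a b ε₁ ε₂) x)
    (hout : ∀ t, 1 ≤ t → x t ∉ K1 a ε₁ ∩ K2 b ε₂) :
    ∃ N, 1 ≤ N ∧ ∀ t, N ≤ t → (x (t + 1) ∈ K1 a ε₁ ↔ x t ∈ K1 a ε₁) := by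
  have hf : ∀ y, semiProfile a b ε₁ ε₂ y ∈ SPD := fun _ => payoffPD_mem_SPD _ _
  set ε := min (min ε₁ ε₂) 1
  have hε : 0 < ε := lt_min (lt_min hε₁ hε₂) one_pos
  obtain ⟨N, hN⟩ := exists_nat_gt (6 / ε)
  have hN0 : (0 : ℝ) < N := (div_pos (by norm_num) hε).trans hN
  have hN1 : 1 ≤ N := Nat.cast_pos.1 hN0
  set δ := 1 / (N : ℝ)
  have hδ : 6 * δ < ε := by
    rw [div_lt_iff₀ hε] at hN
    rw [← mul_div_assoc, mul_one, div_lt_iff₀ hN0]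
    linarith
  have hNt : ∀ t, N ≤ t → 1 / (t : ℝ) ≤ δ := fun t ht =>
    one_div_le_one_div_of_le hN0 (by exact_mod_cast ht)
  have hsum : ∀ t, N ≤ t → |x t 0 + x t 1 - 3| ≤ δ := fun t ht =>
    (hx.abs_fst_add_snd_sub_three_le (fun s hs => semiProfile_apply_zero_add_apply_one ha hb
      (hx.mem_SPD hf hs) (hout s hs)) (hN1.trans ht)).trans (hNt t ht)
  have hle : ∀ t, N ≤ t → (x t ∈ K1 a ε₁ → x t 1 ≤ 3 / 2 - ε / 2 + δ) ∧
      (x t ∉ K1 a ε₁ → x t 0 ≤ 3 / 2 - ε / 2 + δ) := fun t ht =>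
    apply_le_of_notMem_K1_inter_K2 ha hb ((min_le_left _ _).trans (min_le_left _ _))
      ((min_le_left _ _).trans (min_le_right _ _)) (min_le_right _ _) (by linarith)
      (hx.mem_SPD hf (hN1.trans ht)) (hsum t ht) (hout t (hN1.trans ht))
  have hstep : ∀ t, N ≤ t → ∀ i, x (t + 1) i ≤ x t i + 3 * δ := by
    intro t ht i
    have h := hNt (t + 1) (by omega)
    push_cast at h
    calc x (t + 1) i ≤ x t i + 3 / ((t : ℝ) + 1) := hx.apply_succ_le hf (hN1.trans ht) i
      _ ≤ x t i + 3 * δ := by rw [div_eq_mul_one_div]; linarith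
  -- a switch at stage `t` would bring the coordinate sum of `x (t + 1)` down to `3 - ε + 5 δ`
  refine ⟨N, hN1, fun t ht => ⟨fun h => ?_, fun h => ?_⟩⟩ <;> by_contra h'
  · have := (hle (t + 1) (by omega)).1 h
    have := (hle t ht).2 h'
    have := hstep t ht 0
    have := abs_le.1 (hsum (t + 1) (by omega))
    linarith
  · have := (hle t ht).1 h
    have := (hle (t + 1) (by omega)).2 h'
    have := hstep t ht 1
    have := abs_le.1 (hsum (t + 1) (by omega))
    linarith

lemma exists_mem_K1_inter_K2 (ha : UpperBranch a) (hb : UpperBranch (swapE2 b))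
    (hε₁ : 0 < ε₁) (hε₂ : 0 < ε₂) (hx : IsTrajPD (semiProfile a b ε₁ ε₂) x) :
    ∃ T, 1 ≤ T ∧ x T ∈ K1 a ε₁ ∩ K2 b ε₂ := by
  by_contra! hout
  have hf : ∀ y, semiProfile a b ε₁ ε₂ y ∈ SPD := fun _ => payoffPD_mem_SPD _ _
  obtain ⟨N, hN, hsucc⟩ := exists_forall_ge_mem_K1_succ_iff ha hb hε₁ hε₂ hx hout
  have hconst : ∀ t, N ≤ t → (x t ∈ K1 a ε₁ ↔ x N ∈ K1 a ε₁) := by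
    intro t ht
    induction t, ht using Nat.le_induction with
    | base => rfl
    | succ t ht ih => exact (hsucc t ht).trans ih
  have hS : ∀ t, N ≤ t → x t ∈ SPD := fun t ht => hx.mem_SPD hf (hN.trans ht)
  by_cases hK : x N ∈ K1 a ε₁
  · have hlim := hx.tendsto_of_forall_ge hN fun t ht =>
      semiProfile_of_mem_K1 ((hconst t ht).2 hK) fun h2 => hout t (hN.trans ht) ⟨(hconst t ht).2 hK, h2⟩
    obtain ⟨t, hlt, ht⟩ := (((PiLp.continuous_apply 2 _ 0).tendsto _).comp hlim |>.eventually_lt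
      (((PiLp.continuous_apply 2 _ 1).tendsto _).comp hlim) (by norm_num) |>.and
      (eventually_ge_atTop N)).exists
    exact hout t (hN.trans ht) ⟨(hconst t ht).2 hK, mem_K2_of_fst_le_snd hb (hS t ht) hlt.le⟩
  · have hlim := hx.tendsto_of_forall_ge hN fun t ht =>
      semiProfile_of_notMem_K1 ha hb (hS t ht) (mt (hconst t ht).1 hK)
    obtain ⟨t, hlt, ht⟩ := (((PiLp.continuous_apply 2 _ 1).tendsto _).comp hlim |>.eventually_lt
      (((PiLp.continuous_apply 2 _ 0).tendsto _).comp hlim) (by norm_num) |>.and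
      (eventually_ge_atTop N)).exists
    exact hK ((hconst t ht).1 (mem_K1_of_snd_le_fst ha (hS t ht) hlt.le))

end Dynamics

theorem stmt13_general (a b : E2) (ha : a ∈ BPD) (ha1 : a ≠ pt 1 (5 / 2))
    (hb : b ∈ BPD) (hb2 : b ≠ pt (5 / 2) 1)
    (ε₁ ε₂ : ℝ) (hε₁ : 0 < ε₁) (hε₂ : 0 < ε₂)
    (hab : a 0 ≤ 2 ∧ 2 ≤ b 0) (x : ℕ → E2)
    (hx : IsTrajPD (fun p => payoffPD (semi1 a ε₁ p) (semi2 b ε₂ p)) x) :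
    Tendsto x atTop (nhds (pt 2 2)) := by
  have ha' := upperBranch_of_mem_BPD ha ha1 hab.1
  have hb' := upperBranch_swapE2_of_mem_BPD hb hb2 hab.2
  obtain ⟨T, hT, hxT⟩ := exists_mem_K1_inter_K2 ha' hb' hε₁ hε₂ hx
  exact tendsto_of_mem_K1_inter_K2 ha' hb' hx hT hxT

/-- Theorem 4.2, case a₁ ≤ 2 ≤ b₁: if player 1 plays the semi-cooperative strategy
determined by a and player 2 the one determined by b, with a₁ ≤ 2 ≤ b₁, then every
trajectory of average payoffs, from any initial point in 𝔖, converges to (2,2). -/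
theorem stmt13 (a b : E2) (ha : a ∈ BPD) (ha1 : a ≠ pt 1 (5 / 2)) (ha2 : a ≠ pt (5 / 2) 1)
    (hb : b ∈ BPD) (hb1 : b ≠ pt 1 (5 / 2)) (hb2 : b ≠ pt (5 / 2) 1)
    (ε₁ ε₂ : ℝ) (hε₁ : 0 < ε₁) (hε₂ : 0 < ε₂)
    (hab : a 0 ≤ 2 ∧ 2 ≤ b 0) (x : ℕ → E2)
    (hx : IsTrajPD (fun p => payoffPD (semi1 a ε₁ p) (semi2 b ε₂ p)) x) :
    Tendsto x atTop (nhds (pt 2 2)) :=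
  stmt13_general a b ha ha1 hb hb2 ε₁ ε₂ hε₁ hε₂ hab x hx
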